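/- (Transience of Euler-type schemes with heavy-tailed increments and super-linear drift.) Let h > 0, let b : ℝᵈ → ℝᵈ be continuous, and let (Z_k)_{k∈ℕ} be an i.i.d. sequence of ℝᵈ-valued random vectors with mean zero whose common density p_{α,h} satisfies, for some α ∈ (1,2): 0 < liminf_{r→∞} r^α ∫_{{|x|>r}} p_{α,h}(x) dx ≤ limsup_{r→∞} r^α ∫_{{|x|>r}} p_{α,h}(x) dx < ∞. Define the Markov chain X = (X_n)_{n∈ℕ} by X_{k+1} = X_k + h b(X_k) + Z_{k+1} for k ∈ ℕ. If liminf_{|x|→∞} |b(x)|/|x| = ∞, then the chain X is transient: ℙ_x( lim_{n→∞} |X_n| = ∞ ) = 1 for every starting point x ∈ ℝᵈ. -/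

import Mathlib

/-
Beyond some radius `R₀` the drift map `y ↦ y + h b(y)` triples the norm, so a chain that has
reached a level `R ≥ R₀` escapes to infinity geometrically (`‖X_{n+j}‖ ≥ R 2^j`) unless some
later increment satisfies `‖Z_{n+1+j}‖ > R 2^j`. Since the tail of the noise is positive at every
radius, the chain leaves every ball almost surely; splitting on the first time it exceeds `R`
and using independence of the future increments from the past, the probability of not escaping
is at most `∑ⱼ ℙ(‖Z‖ > R 2^j) = O(R^{-α})`, which tends to `0` as `R → ∞`.
-/

open MeasureTheory ProbabilityTheory Filter Set
open scoped ENNReal NNReal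

noncomputable section

/-- The Euler-type Markov chain `X_{k+1} = X_k + h b(X_k) + Z_{k+1}`, `X_0 = x`,
driven by the noise sequence `Z`. -/
def eulerChain {Ω E : Type*} [AddCommGroup E] [Module ℝ E]
    (h : ℝ) (b : E → E) (Z : ℕ → Ω → E) (x : E) : ℕ → Ω → E
  | 0 => fun _ => x
  | (k + 1) => fun ω =>
      eulerChain h b Z x k ω + h • b (eulerChain h b Z x k ω) + Z (k + 1) ω

open scoped Topology

theorem pos_of_antitone_of_liminf_mul_pos {f g : ℝ → ℝ≥0∞} (hf : Antitone f)
    (h : 0 < liminf (fun r => g r * f r) atTop) (r : ℝ) : 0 < f r := by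
  refine pos_iff_ne_zero.mpr fun hr => h.ne' ?_
  have hzero : (fun r => g r * f r) =ᶠ[atTop] fun _ => 0 := by
    filter_upwards [eventually_ge_atTop r] with s hs
    rw [show f s = 0 from nonpos_iff_eq_zero.mp (hr ▸ hf hs), mul_zero]
  rw [liminf_congr hzero, liminf_const]

theorem exists_le_mul_rpow_neg_of_limsup_lt_top {f : ℝ → ℝ≥0∞} {α : ℝ}
    (h : limsup (fun r => ENNReal.ofReal (r ^ α) * f r) atTop < ⊤) :
    ∃ C ≠ ⊤, ∀ᶠ r in atTop, f r ≤ C * ENNReal.ofReal (r ^ (-α)) := by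
  obtain ⟨C, hlt, hC⟩ := exists_between h
  refine ⟨C, hC.ne, ?_⟩
  filter_upwards [eventually_lt_of_limsup_lt hlt, eventually_gt_atTop 0] with r hr hr0
  have hone : ENNReal.ofReal (r ^ α) * ENNReal.ofReal (r ^ (-α)) = 1 := by
    rw [← ENNReal.ofReal_mul (by positivity), ← Real.rpow_add hr0, add_neg_cancel,
      Real.rpow_zero, ENNReal.ofReal_one]
  calc f r = ENNReal.ofReal (r ^ α) * f r * ENNReal.ofReal (r ^ (-α)) := by
        rw [mul_right_comm, hone, one_mul]
    _ ≤ C * ENNReal.ofReal (r ^ (-α)) := by gcongr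

theorem tendsto_tsum_mul_two_pow_of_le_rpow_neg {f : ℝ → ℝ≥0∞} {C : ℝ≥0∞} {α : ℝ}
    (hC : C ≠ ⊤) (hα : 0 < α) (hf : ∀ᶠ r in atTop, f r ≤ C * ENNReal.ofReal (r ^ (-α))) :
    Tendsto (fun R => ∑' j : ℕ, f (R * 2 ^ j)) atTop (𝓝 0) := by
  set q : ℝ := 2 ^ (-α)
  have hq : ENNReal.ofReal q < 1 :=
    ENNReal.ofReal_lt_one.mpr (Real.rpow_lt_one_of_one_lt_of_neg one_lt_two (neg_neg_of_pos hα))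
  obtain ⟨r₀, hr₀⟩ := hf.exists_forall_of_atTop
  have hbound : ∀ᶠ R in atTop,
      ∑' j : ℕ, f (R * 2 ^ j) ≤ C * (1 - ENNReal.ofReal q)⁻¹ * ENNReal.ofReal (R ^ (-α)) := by
    filter_upwards [eventually_ge_atTop r₀, eventually_gt_atTop 0] with R hR hR0
    have hterm : ∀ j : ℕ, f (R * 2 ^ j) ≤ C * ENNReal.ofReal (R ^ (-α)) * ENNReal.ofReal q ^ j := by
      intro j
      refine (hr₀ _ (hR.trans (le_mul_of_one_le_right hR0.le (one_le_pow₀ one_le_two)))).trans ?_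
      rw [Real.mul_rpow hR0.le (by positivity), ← Real.rpow_pow_comm zero_le_two,
        ENNReal.ofReal_mul (by positivity), ENNReal.ofReal_pow (by positivity), mul_assoc]
    calc ∑' j : ℕ, f (R * 2 ^ j)
        ≤ ∑' j : ℕ, C * ENNReal.ofReal (R ^ (-α)) * ENNReal.ofReal q ^ j :=
          ENNReal.tsum_le_tsum hterm
      _ = C * (1 - ENNReal.ofReal q)⁻¹ * ENNReal.ofReal (R ^ (-α)) := by
          rw [ENNReal.tsum_mul_left, ENNReal.tsum_geometric]; ring
  have hlim : Tendsto (fun R : ℝ => C * (1 - ENNReal.ofReal q)⁻¹ * ENNReal.ofReal (R ^ (-α)))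
      atTop (𝓝 0) := by
    have := ENNReal.Tendsto.const_mul
      (ENNReal.tendsto_ofReal (tendsto_rpow_neg_atTop hα))
      (Or.inr (ENNReal.mul_ne_top hC (ENNReal.inv_ne_top.mpr (tsub_pos_of_lt hq).ne')))
    simpa using this
  exact tendsto_of_tendsto_of_tendsto_of_le_of_le' tendsto_const_nhds hlim
    (Eventually.of_forall fun _ => zero_le) hbound

theorem measure_iUnion_inter_iUnion_le_tsum {Ω ι κ : Type*} [MeasurableSpace Ω] {μ : Measure Ω}
    [IsProbabilityMeasure μ] [Countable ι] [Countable κ] {A : ι → Set Ω} {B : ι → κ → Set Ω}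
    {t : κ → ℝ≥0∞} (hA : ∀ n, MeasurableSet (A n)) (hAd : Pairwise (Function.onFun Disjoint A))
    (hAB : ∀ n j, μ (A n ∩ B n j) ≤ μ (A n) * t j) :
    μ (⋃ n, A n ∩ ⋃ j, B n j) ≤ ∑' j, t j :=
  calc μ (⋃ n, A n ∩ ⋃ j, B n j)
      ≤ ∑' n, ∑' j, μ (A n ∩ B n j) := by
        refine (measure_iUnion_le _).trans (ENNReal.tsum_le_tsum fun n => ?_)
        rw [inter_iUnion]
        exact measure_iUnion_le _
    _ ≤ ∑' n, μ (A n) * ∑' j, t j := by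
        gcongr with n
        rw [← ENNReal.tsum_mul_left]
        exact ENNReal.tsum_le_tsum (hAB n)
    _ = μ (⋃ n, A n) * ∑' j, t j := by rw [ENNReal.tsum_mul_right, measure_iUnion hAd hA]
    _ ≤ ∑' j, t j := mul_le_of_le_one_left zero_le prob_le_one

theorem measure_forall_mem_eq_zero_of_iIndepFun {Ω E : Type*} [MeasurableSpace Ω]
    [MeasurableSpace E] {μ : Measure Ω} {Z : ℕ → Ω → E} {ν : Measure E} {S : Set E}
    (hZ_meas : ∀ n, Measurable (Z n)) (hZ_indep : iIndepFun Z μ) (hlaw : ∀ n, μ.map (Z n) = ν)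
    (hS : MeasurableSet S) (hνS : ν S < 1) :
    μ {ω | ∀ n, Z n ω ∈ S} = 0 := by
  have hN : ∀ N, μ {ω | ∀ n, Z n ω ∈ S} ≤ ν S ^ N := fun N =>
    calc μ {ω | ∀ n, Z n ω ∈ S}
        ≤ μ (⋂ i ∈ Finset.range N, Z i ⁻¹' S) :=
          measure_mono fun ω hω => mem_iInter₂.mpr fun i _ => hω i
      _ = ∏ i ∈ Finset.range N, μ (Z i ⁻¹' S) :=
          hZ_indep.measure_inter_preimage_eq_mul _ fun _ _ => hS
      _ = ν S ^ N := by
          simp [← Measure.map_apply (hZ_meas _) hS, hlaw]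
  exact le_antisymm
    (ge_of_tendsto' (ENNReal.tendsto_pow_atTop_nhds_zero_of_lt_one hνS) hN) zero_le

section Deterministic

variable {Ω E : Type*} [NormedAddCommGroup E] [NormedSpace ℝ E]
  {h : ℝ} {b : E → E} {Z : ℕ → Ω → E} {x : E}

theorem eulerChain_succ (k : ℕ) (ω : Ω) :
    eulerChain h b Z x (k + 1) ω =
      (eulerChain h b Z x k ω + h • b (eulerChain h b Z x k ω)) + Z (k + 1) ω :=
  rfl

theorem eventually_three_mul_norm_le_norm_add_smul (hh : 0 < h)
    (hdrift : Tendsto (fun y : E => ‖b y‖ / ‖y‖) (comap (‖·‖) atTop) atTop) :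
    ∀ᶠ R in atTop, ∀ y : E, R ≤ ‖y‖ → 3 * ‖y‖ ≤ ‖y + h • b y‖ := by
  obtain ⟨M, hM⟩ := (atTop_basis.comap (‖·‖)).eventually_iff.mp
    (hdrift.eventually_ge_atTop (4 / h))
  filter_upwards [eventually_ge_atTop (max M 1)] with R hR y hy
  have hy0 : 0 < ‖y‖ := zero_lt_one.trans_le ((le_max_right _ _).trans (hR.trans hy))
  have hb : 4 * ‖y‖ ≤ h * ‖b y‖ := by
    have := hM.2 (show ‖y‖ ∈ Ici M from (le_max_left _ _).trans (hR.trans hy))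
    rwa [div_le_div_iff₀ hh hy0, mul_comm ‖b y‖] at this
  have := norm_sub_le_norm_add (h • b y) y
  rw [norm_smul, Real.norm_of_nonneg hh.le, add_comm] at this
  linarith

theorem tendsto_norm_eulerChain_of_le_two_pow {R : ℝ} (hR : 0 < R)
    (hgrow : ∀ y : E, R ≤ ‖y‖ → 3 * ‖y‖ ≤ ‖y + h • b y‖) {n : ℕ} {ω : Ω}
    (hn : R ≤ ‖eulerChain h b Z x n ω‖) (hZ : ∀ j, ‖Z (n + 1 + j) ω‖ ≤ R * 2 ^ j) :
    Tendsto (fun m => ‖eulerChain h b Z x m ω‖) atTop atTop := by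
  have hgeom : ∀ j : ℕ, R * 2 ^ j ≤ ‖eulerChain h b Z x (n + j) ω‖ := by
    intro j
    induction j with
    | zero => simpa using hn
    | succ j ih =>
      set y := eulerChain h b Z x (n + j) ω
      have hRy : R ≤ ‖y‖ := (le_mul_of_one_le_right hR.le (one_le_pow₀ one_le_two)).trans ih
      have hstep := norm_sub_le_norm_add (y + h • b y) (Z (n + j + 1) ω)
      rw [← eulerChain_succ] at hstep
      have hZj := hZ j
      rw [Nat.add_right_comm] at hZj
      show R * 2 ^ (j + 1) ≤ ‖eulerChain h b Z x (n + j + 1) ω‖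
      linarith [hgrow y hRy, show R * 2 ^ (j + 1) = 2 * (R * 2 ^ j) by ring]
  rw [← tendsto_add_atTop_iff_nat n]
  exact tendsto_atTop_mono (fun j => (hgeom j).trans_eq (by rw [add_comm]))
    ((tendsto_pow_atTop_atTop_of_one_lt one_lt_two).const_mul_atTop hR)

theorem forall_lt_or_large_increment_after_first_hit_of_not_tendsto {R : ℝ} (hR : 0 < R)
    (hgrow : ∀ y : E, R ≤ ‖y‖ → 3 * ‖y‖ ≤ ‖y + h • b y‖) {ω : Ω}
    (hω : ¬Tendsto (fun m => ‖eulerChain h b Z x m ω‖) atTop atTop) :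
    (∀ n, ‖eulerChain h b Z x n ω‖ < R) ∨
      ∃ n, (R ≤ ‖eulerChain h b Z x n ω‖ ∧ ∀ m < n, ‖eulerChain h b Z x m ω‖ < R) ∧
        ∃ j, R * 2 ^ j < ‖Z (n + 1 + j) ω‖ := by
  by_cases hbelow : ∀ n, ‖eulerChain h b Z x n ω‖ < R
  · exact Or.inl hbelow
  push Not at hbelow
  classical
  refine Or.inr ⟨Nat.find hbelow, ⟨Nat.find_spec hbelow, fun m hm => ?_⟩, ?_⟩
  · exact not_le.mp (Nat.find_min hbelow hm)
  · by_contra! hsmall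
    exact hω (tendsto_norm_eulerChain_of_le_two_pow hR hgrow (Nat.find_spec hbelow) hsmall)

end Deterministic

section Probabilistic

variable {Ω E : Type*} [MeasurableSpace Ω] {μ : Measure Ω} [IsProbabilityMeasure μ]
  [NormedAddCommGroup E] [NormedSpace ℝ E] [MeasurableSpace E] [BorelSpace E]
  {h : ℝ} {b : E → E} {Z : ℕ → Ω → E} {x : E}

theorem measurable_eulerChain_natural [SecondCountableTopology E] (hb : Measurable b)
    (hZ : ∀ n, StronglyMeasurable (Z n)) (n : ℕ) :
    Measurable[Filtration.natural Z hZ n] (eulerChain h b Z x n) := by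
  induction n with
  | zero => exact measurable_const
  | succ k ih =>
    have hXk := ih.mono (Filtration.mono _ k.le_succ) le_rfl
    exact (hXk.add ((hb.comp hXk).const_smul h)).add
      ((Filtration.stronglyAdapted_natural hZ (k + 1)).measurable)

theorem measure_forall_norm_eulerChain_lt_eq_zero [ProperSpace E] {ν : Measure E}
    (hb : Continuous b) (hZ_meas : ∀ n, Measurable (Z n)) (hZ_indep : iIndepFun Z μ)
    (hlaw : ∀ n, μ.map (Z n) = ν) (hν : ∀ r, 0 < ν {z | r < ‖z‖}) (R : ℝ) :
    μ {ω | ∀ n, ‖eulerChain h b Z x n ω‖ < R} = 0 := by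
  obtain ⟨c, hc⟩ := (isCompact_closedBall (0 : E) R).exists_bound_of_continuousOn
    (continuous_id.add (hb.const_smul h)).continuousOn
  have : IsProbabilityMeasure ν :=
    hlaw 0 ▸ Measure.isProbabilityMeasure_map (hZ_meas 0).aemeasurable
  have hball : ν (Metric.closedBall 0 (R + c)) < 1 := by
    have hcompl : (Metric.closedBall (0 : E) (R + c))ᶜ = {z | R + c < ‖z‖} := by ext; simp
    have := hν (R + c)
    rwa [← hcompl, prob_compl_eq_one_sub Metric.isClosed_closedBall.measurableSet,
      tsub_pos_iff_lt] at this
  have hsub : {ω | ∀ n, ‖eulerChain h b Z x n ω‖ < R} ⊆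
      {ω | ∀ n, Z (n + 1) ω ∈ Metric.closedBall 0 (R + c)} := by
    intro ω hω n
    set y := eulerChain h b Z x n ω
    have hZ : Z (n + 1) ω = eulerChain h b Z x (n + 1) ω - (y + h • b y) := by
      rw [eulerChain_succ]; abel
    have hy : ‖y + h • b y‖ ≤ c := hc y (mem_closedBall_zero_iff.mpr (hω n).le)
    rw [mem_closedBall_zero_iff, hZ]
    linarith [norm_sub_le (eulerChain h b Z x (n + 1) ω) (y + h • b y), hω (n + 1)]
  exact measure_mono_null hsub (measure_forall_mem_eq_zero_of_iIndepFun
    (fun n => hZ_meas (n + 1)) (hZ_indep.precomp Nat.succ_injective) (fun n => hlaw (n + 1))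
    Metric.isClosed_closedBall.measurableSet hball)

theorem measure_not_tendsto_norm_eulerChain_le [ProperSpace E] {ν : Measure E}
    (hb : Continuous b) (hZ_meas : ∀ n, Measurable (Z n)) (hZ_indep : iIndepFun Z μ)
    (hlaw : ∀ n, μ.map (Z n) = ν) (hν : ∀ r, 0 < ν {z | r < ‖z‖}) {R : ℝ} (hR : 0 < R)
    (hgrow : ∀ y : E, R ≤ ‖y‖ → 3 * ‖y‖ ≤ ‖y + h • b y‖) :
    μ {ω | ¬Tendsto (fun m => ‖eulerChain h b Z x m ω‖) atTop atTop} ≤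
      ∑' j : ℕ, ν {z | R * 2 ^ j < ‖z‖} := by
  have hZ_sm : ∀ n, StronglyMeasurable (Z n) := fun n => (hZ_meas n).stronglyMeasurable
  set X := eulerChain h b Z x
  set firstAbove : ℕ → Set Ω := fun n =>
    X n ⁻¹' {y | R ≤ ‖y‖} ∩ ⋂ m, ⋂ (_ : m < n), X m ⁻¹' {y | ‖y‖ < R}
  set largeIncrement : ℕ → ℕ → Set Ω := fun n j => Z (n + 1 + j) ⁻¹' {z | R * 2 ^ j < ‖z‖}
  have hlarge_meas : ∀ r : ℝ, MeasurableSet {z : E | r < ‖z‖} := fun r =>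
    measurableSet_lt measurable_const measurable_norm
  have hfirst_meas : ∀ n, MeasurableSet[Filtration.natural Z hZ_sm n] (firstAbove n) := by
    intro n
    have hX : ∀ m ≤ n, Measurable[Filtration.natural Z hZ_sm n] (X m) := fun m hm =>
      (measurable_eulerChain_natural hb.measurable hZ_sm m).mono (Filtration.mono _ hm) le_rfl
    exact (hX n le_rfl (measurableSet_le measurable_const measurable_norm)).inter <|
      .iInter fun m => .iInter fun hm =>
        hX m hm.le (measurableSet_lt measurable_norm measurable_const)
  have hdisj : Pairwise (Function.onFun Disjoint firstAbove) := by
    refine pairwise_disjoint_on firstAbove |>.mpr fun n m hnm => ?_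
    exact disjoint_left.mpr fun ω hn hm =>
      (show ‖X n ω‖ < R from mem_iInter₂.mp hm.2 n hnm).not_ge hn.1
  have hindep : ∀ n j, μ (firstAbove n ∩ largeIncrement n j) =
      μ (firstAbove n) * ν {z | R * 2 ^ j < ‖z‖} := by
    intro n j
    rw [inter_comm, (Indep_iff _ _ _).mp (hZ_indep.indep_comap_natural_of_lt hZ_sm
      (by omega : n < n + 1 + j)) _ _ ⟨_, hlarge_meas _, rfl⟩ (hfirst_meas n), mul_comm,
      ← Measure.map_apply (hZ_meas _) (hlarge_meas _), hlaw]
  calc μ {ω | ¬Tendsto (fun m => ‖X m ω‖) atTop atTop}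
      ≤ μ ({ω | ∀ n, ‖X n ω‖ < R} ∪ ⋃ n, firstAbove n ∩ ⋃ j, largeIncrement n j) := by
        refine measure_mono fun ω hω => ?_
        simpa [firstAbove, largeIncrement] using
          forall_lt_or_large_increment_after_first_hit_of_not_tendsto hR hgrow hω
    _ ≤ 0 + ∑' j : ℕ, ν {z | R * 2 ^ j < ‖z‖} := by
        refine (measure_union_le _ _).trans (add_le_add
          (measure_forall_norm_eulerChain_lt_eq_zero hb hZ_meas hZ_indep hlaw hν R).le ?_)
        exact measure_iUnion_inter_iUnion_le_tsum
          (fun n => Filtration.le _ n _ (hfirst_meas n)) hdisj fun n j => (hindep n j).le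
    _ = ∑' j : ℕ, ν {z | R * 2 ^ j < ‖z‖} := zero_add _

theorem ae_tendsto_norm_eulerChain [ProperSpace E] {ν : Measure E}
    (hb : Continuous b) (hZ_meas : ∀ n, Measurable (Z n)) (hZ_indep : iIndepFun Z μ)
    (hlaw : ∀ n, μ.map (Z n) = ν) (hν_pos : ∀ r, 0 < ν {z | r < ‖z‖})
    (hν_tail : Tendsto (fun R => ∑' j : ℕ, ν {z | R * 2 ^ j < ‖z‖}) atTop (𝓝 0))
    (hgrow : ∀ᶠ R in atTop, ∀ y : E, R ≤ ‖y‖ → 3 * ‖y‖ ≤ ‖y + h • b y‖) :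
    ∀ᵐ ω ∂μ, Tendsto (fun m => ‖eulerChain h b Z x m ω‖) atTop atTop := by
  refine ae_iff.mpr (le_antisymm (ge_of_tendsto hν_tail ?_) zero_le)
  filter_upwards [hgrow, eventually_gt_atTop 0] with R hgrowR hR
  exact measure_not_tendsto_norm_eulerChain_le hb hZ_meas hZ_indep hlaw hν_pos hR hgrowR

end Probabilistic

theorem euler_scheme_transient_general
    (d : ℕ)
    {Ω : Type*} [MeasurableSpace Ω] (μ : Measure Ω) [IsProbabilityMeasure μ]
    (h : ℝ) (hh : 0 < h)
    (b : EuclideanSpace ℝ (Fin d) → EuclideanSpace ℝ (Fin d)) (hb : Continuous b)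
    (Z : ℕ → Ω → EuclideanSpace ℝ (Fin d))
    (hZ_meas : ∀ k, Measurable (Z k))
    (hZ_indep : iIndepFun (m := fun _ : ℕ => (inferInstance : MeasurableSpace (EuclideanSpace ℝ (Fin d)))) Z μ)
    (p : EuclideanSpace ℝ (Fin d) → ℝ≥0∞)
    (hZ_law : ∀ k, μ.map (Z k) = MeasureTheory.volume.withDensity p)
    (α : ℝ) (hα : α ∈ Set.Ioo (1 : ℝ) 2)
    (htail_lb : 0 < Filter.liminf
      (fun r : ℝ => ENNReal.ofReal (r ^ α) * μ.map (Z 0) {z | r < ‖z‖}) atTop)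
    (htail_ub : Filter.limsup
      (fun r : ℝ => ENNReal.ofReal (r ^ α) * μ.map (Z 0) {z | r < ‖z‖}) atTop < ⊤)
    (hdrift : Tendsto (fun x : EuclideanSpace ℝ (Fin d) => ‖b x‖ / ‖x‖)
      (Filter.comap (fun x : EuclideanSpace ℝ (Fin d) => ‖x‖) atTop) atTop) :
    ∀ x : EuclideanSpace ℝ (Fin d),
      ∀ᵐ ω ∂μ, Tendsto (fun n => ‖eulerChain h b Z x n ω‖) atTop atTop := by
  intro x
  have hlaw : ∀ k, μ.map (Z k) = μ.map (Z 0) := fun k => (hZ_law k).trans (hZ_law 0).symm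
  have htail_anti : Antitone fun r : ℝ => μ.map (Z 0) {z | r < ‖z‖} :=
    fun r s hrs => measure_mono fun z hz => hrs.trans_lt hz
  obtain ⟨C, hC, htail_le⟩ := exists_le_mul_rpow_neg_of_limsup_lt_top htail_ub
  exact ae_tendsto_norm_eulerChain hb hZ_meas hZ_indep hlaw
    (pos_of_antitone_of_liminf_mul_pos htail_anti htail_lb)
    (tendsto_tsum_mul_two_pow_of_le_rpow_neg hC (zero_lt_one.trans hα.1) htail_le)
    (eventually_three_mul_norm_le_norm_add_smul hh hdrift)

/-- **Theorem (transience of Euler-type schemes with heavy-tailed increments and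
super-linear drift).** Let `h > 0`, `b : ℝᵈ → ℝᵈ` continuous, and `(Z_k)` i.i.d. mean-zero
random vectors with common density `p` satisfying
`0 < liminf_{r→∞} r^α ∫_{|x|>r} p ≤ limsup_{r→∞} r^α ∫_{|x|>r} p < ∞` for some
`α ∈ (1,2)`. If `liminf_{|x|→∞} |b(x)|/|x| = ∞`, then the chain
`X_{k+1} = X_k + h b(X_k) + Z_{k+1}` is transient: `ℙ_x(|X_n| → ∞) = 1` for every
starting point `x`. -/
theorem euler_scheme_transient
    (d : ℕ)
    {Ω : Type*} [MeasurableSpace Ω] (μ : Measure Ω) [IsProbabilityMeasure μ]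
    (h : ℝ) (hh : 0 < h)
    (b : EuclideanSpace ℝ (Fin d) → EuclideanSpace ℝ (Fin d)) (hb : Continuous b)
    (Z : ℕ → Ω → EuclideanSpace ℝ (Fin d))
    (hZ_meas : ∀ k, Measurable (Z k))
    (hZ_indep : iIndepFun (m := fun _ : ℕ => (inferInstance : MeasurableSpace (EuclideanSpace ℝ (Fin d)))) Z μ)
    (p : EuclideanSpace ℝ (Fin d) → ℝ≥0∞) (hp_meas : Measurable p)
    (hZ_law : ∀ k, μ.map (Z k) = MeasureTheory.volume.withDensity p)
    (hZ_int : ∀ k, Integrable (Z k) μ)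
    (hZ_mean : ∀ k, ∫ ω, Z k ω ∂μ = 0)
    (α : ℝ) (hα : α ∈ Set.Ioo (1 : ℝ) 2)
    (htail_lb : 0 < Filter.liminf
      (fun r : ℝ => ENNReal.ofReal (r ^ α) * μ.map (Z 0) {z | r < ‖z‖}) atTop)
    (htail_ub : Filter.limsup
      (fun r : ℝ => ENNReal.ofReal (r ^ α) * μ.map (Z 0) {z | r < ‖z‖}) atTop < ⊤)
    (hdrift : Tendsto (fun x : EuclideanSpace ℝ (Fin d) => ‖b x‖ / ‖x‖)
      (Filter.comap (fun x : EuclideanSpace ℝ (Fin d) => ‖x‖) atTop) atTop) :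
    ∀ x : EuclideanSpace ℝ (Fin d),
      ∀ᵐ ω ∂μ, Tendsto (fun n => ‖eulerChain h b Z x n ω‖) atTop atTop :=
  euler_scheme_transient_general d μ h hh b hb Z hZ_meas hZ_indep p hZ_law α hα htail_lb htail_ub
    hdrift

end
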